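/- Let φ = Q̄ψ be a closed SO₂ formula in prenex normal form, with quantifier prefix Q̄ = Q₁f₁ … Q_k f_k and quantifier-free matrix ψ. Let φ^BV = Q̄^BV (ψ^BV = 1), where ψ^BV is the bit-vector term of width 1 obtained by the inductive translation ((ρ₁∧ρ₂)^BV = ρ₁^BV & ρ₂^BV; (¬ρ)^BV = ~ρ^BV; f()^BV = x_f; f(ρ_{n-1},…,ρ_0)^BV = x_f[0^{2^n−n} · ρ_{n-1}^BV · … · ρ_0^BV] for f of arity n), and Q̄^BV is obtained from Q̄ by replacing each quantifier Q_i f_i by the bit-vector quantifier Q_i x_{f_i} over bit-vectors of width 2^{ar(f_i)}. Then φ is satisfiable (i.e., ⟦φ⟧_I = 1 for some, equivalently every, F-interpretation I, since φ is closed) if and only if the closed quantified bit-vector formula φ^BV is true. -/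

import Mathlib

/-! Prenex second-order Boolean (SO₂) formulas `Q̄ψ`, their valuation, the
translation to a closed quantified bit-vector formula
`φ^BV = Q̄^BV (ψ^BV = 1)`, and the statement that a closed prenex SO₂
formula is satisfiable iff its translation is true. -/

/-- Quantifier-free SO₂ formulas (the matrix `ψ`). -/
inductive SO2QF (F : Type) (ar : F → ℕ) : Type
  | and : SO2QF F ar → SO2QF F ar → SO2QF F ar
  | not : SO2QF F ar → SO2QF F ar
  | app : (f : F) → (Fin (ar f) → SO2QF F ar) → SO2QF F ar

/-- Valuation of a quantifier-free SO₂ formula under an interpretation. -/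
def SO2QF.eval {F : Type} {ar : F → ℕ}
    (I : (f : F) → (Fin (ar f) → Bool) → Bool) : SO2QF F ar → Bool
  | .and φ ψ => φ.eval I && ψ.eval I
  | .not φ => ! φ.eval I
  | .app f args => I f (fun i => (args i).eval I)

/-- Prenex SO₂ formulas: a quantifier prefix over a quantifier-free matrix. -/
inductive SO2Prenex (F : Type) (ar : F → ℕ) : Type
  | matrix : SO2QF F ar → SO2Prenex F ar
  | ex : F → SO2Prenex F ar → SO2Prenex F ar
  | all : F → SO2Prenex F ar → SO2Prenex F ar

/-- Valuation of a prenex SO₂ formula: `⟦∃f φ⟧_I = 1` iff `⟦φ⟧_{I[f↦G]} = 1`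
for some Boolean function `G` of arity `ar f` (maximum), and `⟦∀f φ⟧_I = 1`
iff it holds for every such `G` (minimum). -/
def SO2Prenex.eval {F : Type} {ar : F → ℕ} [DecidableEq F] :
    SO2Prenex F ar → ((f : F) → (Fin (ar f) → Bool) → Bool) → Bool
  | .matrix ψ, I => ψ.eval I
  | .ex f φ, I =>
      decide (∃ G : (Fin (ar f) → Bool) → Bool, φ.eval (Function.update I f G) = true)
  | .all f φ, I =>
      decide (∀ G : (Fin (ar f) → Bool) → Bool, φ.eval (Function.update I f G) = true)

/-- The function symbols occurring in a quantifier-free SO₂ formula. -/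
def SO2QF.symbols {F : Type} {ar : F → ℕ} : SO2QF F ar → Set F
  | .and φ ψ => φ.symbols ∪ ψ.symbols
  | .not φ => φ.symbols
  | .app f args => insert f (⋃ i, (args i).symbols)

/-- `φ.ClosedIn B` holds when every function symbol occurring in the matrix of
`φ` is bound by the quantifier prefix of `φ` or belongs to `B`.  A prenex
formula is closed when it is closed in `∅`. -/
def SO2Prenex.ClosedIn {F : Type} {ar : F → ℕ} : SO2Prenex F ar → Set F → Prop
  | .matrix ψ, B => ψ.symbols ⊆ B
  | .ex f φ, B => φ.ClosedIn (insert f B)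
  | .all f φ, B => φ.ClosedIn (insert f B)

/-- Bit-vector terms over variables `v : V` of widths `w v`: variables,
bitwise and `&`, bitwise negation `~`, zero constants `0^k`, concatenation `·`
(left argument most significant), generalized indexing `t[s]`, and a cast
along an equality of widths. -/
inductive BVTerm (V : Type) (w : V → ℕ) : ℕ → Type
  | var : (v : V) → BVTerm V w (w v)
  | band : {m : ℕ} → BVTerm V w m → BVTerm V w m → BVTerm V w m
  | bnot : {m : ℕ} → BVTerm V w m → BVTerm V w m
  | zero : (k : ℕ) → BVTerm V w k
  | append : {m k : ℕ} → BVTerm V w m → BVTerm V w k → BVTerm V w (m + k)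
  | index : {m : ℕ} → BVTerm V w m → BVTerm V w m → BVTerm V w 1
  | cast : {m k : ℕ} → m = k → BVTerm V w m → BVTerm V w k

/-- Evaluation of a bit-vector term under an assignment `σ`; the generalized
indexing `t[s]` evaluates to the least significant bit of the logical
right-shift of `t` by the numeric value of `s`. -/
def BVTerm.eval {V : Type} {w : V → ℕ} (σ : (v : V) → BitVec (w v)) :
    {m : ℕ} → BVTerm V w m → BitVec m
  | _, .var v => σ v
  | _, .band t₁ t₂ => t₁.eval σ &&& t₂.eval σ
  | _, .bnot t => ~~~ (t.eval σ)
  | _, .zero _ => 0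
  | _, .append t₁ t₂ => t₁.eval σ ++ t₂.eval σ
  | _, .index t s => BitVec.ofBool ((t.eval σ >>> (s.eval σ).toNat).getLsbD 0)
  | _, .cast h t => BitVec.cast h (t.eval σ)

/-- The chain `ρ_{n-1}^BV · ρ_{n-2}^BV · … · ρ_0^BV` of width-1 terms,
concatenated into a term of width `n` (term `i` contributing bit `i`). -/
def chainBV {V : Type} {w : V → ℕ} :
    {n : ℕ} → (Fin n → BVTerm V w 1) → BVTerm V w n
  | 0, _ => .zero 0
  | n + 1, f =>
      .cast (Nat.add_comm 1 n)
        (.append (f ⟨n, n.lt_succ_self⟩) (chainBV (fun i => f i.castSucc)))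

/-- The translation `ψ ↦ ψ^BV`: `(ρ₁ ∧ ρ₂)^BV = ρ₁^BV & ρ₂^BV`,
`(¬ρ)^BV = ~ρ^BV`, `f()^BV = x_f` for a proposition `f`, and
`f(ρ_{n-1},…,ρ_0)^BV = x_f[0^{2^n−n} · ρ_{n-1}^BV · … · ρ_0^BV]` for a proper
function symbol `f` of arity `n`, where `x_f` has width `2^(ar f)`. -/
def transQF {F : Type} {ar : F → ℕ} :
    SO2QF F ar → BVTerm F (fun f => 2 ^ ar f) 1
  | .and ρ₁ ρ₂ => .band (transQF ρ₁) (transQF ρ₂)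
  | .not ρ => .bnot (transQF ρ)
  | .app f args =>
      if h : ar f = 0 then
        .cast (by rw [h, pow_zero]) (.var f)
      else
        .index (.var f)
          (.cast (Nat.sub_add_cancel (Nat.le_of_lt (Nat.lt_two_pow_self (n := ar f))))
            (.append (.zero (2 ^ ar f - ar f))
              (chainBV (fun i => transQF (args i)))))

/-- Truth of the translated quantified bit-vector formula
`Q̄^BV (ψ^BV = 1^{[1]})` under an assignment `σ` of bit-vector values of width
`2^(ar f)` to the variables `x_f`: each SO₂ quantifier `Q f` has been replaced
by the corresponding bit-vector quantifier over `BitVec (2^(ar f))`, and the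
matrix asserts that `ψ^BV` evaluates to the width-1 constant `1`. -/
def bvTruth {F : Type} {ar : F → ℕ} [DecidableEq F] :
    SO2Prenex F ar → ((f : F) → BitVec (2 ^ ar f)) → Prop
  | .matrix ψ, σ => (transQF ψ).eval σ = (1 : BitVec 1)
  | .ex f φ, σ => ∃ x : BitVec (2 ^ ar f), bvTruth φ (Function.update σ f x)
  | .all f φ, σ => ∀ x : BitVec (2 ^ ar f), bvTruth φ (Function.update σ f x)

/-- Encode a tuple of booleans as a natural number, bit `i` being entry `i`. -/
def natOf : {n : ℕ} → (Fin n → Bool) → ℕ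
  | 0, _ => 0
  | n + 1, a => (a ⟨n, n.lt_succ_self⟩).toNat <<< n ||| natOf (fun i => a i.castSucc)

theorem natOf_lt : ∀ {n : ℕ} (a : Fin n → Bool), natOf a < 2 ^ n
  | 0, _ => Nat.one_pos
  | n + 1, a => by
      apply Nat.or_lt_two_pow
      · rw [Nat.shiftLeft_eq]
        calc (a ⟨n, n.lt_succ_self⟩).toNat * 2 ^ n ≤ 1 * 2 ^ n := by
              exact Nat.mul_le_mul_right _ (Bool.toNat_le _)
          _ < 2 ^ (n + 1) := by
              rw [one_mul, pow_succ]; have := Nat.two_pow_pos n; omega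
      · exact lt_of_lt_of_le (natOf_lt _) (Nat.pow_le_pow_right (by norm_num) n.le_succ)

theorem testBit_natOf : ∀ {n : ℕ} (a : Fin n → Bool) (i : Fin n),
    (natOf a).testBit i.val = a i
  | n + 1, a, i => by
      rw [natOf, Nat.testBit_or, Nat.testBit_shiftLeft]
      rcases lt_or_ge i.val n with h | h
      · have h1 : ¬ (i.val ≥ n) := by omega
        have h4 := testBit_natOf (fun j => a j.castSucc) ⟨i.val, h⟩
        simp only [Fin.val_mk] at h4
        simp [h1, h4]
      · have hi : i.val = n := by omega
        have h2 : (natOf fun j => a j.castSucc).testBit i.val = false := by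
          apply Nat.testBit_eq_false_of_lt
          exact lt_of_lt_of_le (natOf_lt _) (Nat.pow_le_pow_right (by norm_num) (by omega))
        rw [h2, Bool.or_false, hi, Nat.sub_self]
        have hieq : i = ⟨n, n.lt_succ_self⟩ := Fin.ext hi
        rw [hieq]
        cases a ⟨n, n.lt_succ_self⟩ <;> simp [Nat.testBit]

theorem natOf_eq_zero {n : ℕ} (hn : n = 0) (a : Fin n → Bool) : natOf a = 0 := by
  subst hn; rfl

theorem ofBool_getLsbD_one : ∀ x : BitVec 1, BitVec.ofBool (x.getLsbD 0) = x := by decide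

/-- The bit-vector encoding a Boolean function. -/
def bvOf {n : ℕ} (G : (Fin n → Bool) → Bool) : BitVec (2 ^ n) :=
  BitVec.ofNat _ (natOf (fun j : Fin (2 ^ n) => G (fun i => (j : ℕ).testBit i.val)))

theorem getLsbD_bvOf {n : ℕ} (G : (Fin n → Bool) → Bool) (a : Fin n → Bool) :
    (bvOf G).getLsbD (natOf a) = G a := by
  have ha : natOf a < 2 ^ n := natOf_lt a
  have h2 := testBit_natOf (fun j : Fin (2 ^ n) => G (fun i => (j : ℕ).testBit i.val))
    ⟨natOf a, ha⟩
  have h3 : (fun i : Fin n => ((⟨natOf a, ha⟩ : Fin (2 ^ n)) : ℕ).testBit i.val) = a :=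
    funext fun i => testBit_natOf a i
  rw [h3] at h2
  simp only [Fin.val_mk] at h2
  rw [bvOf, BitVec.getLsbD_ofNat, h2]
  simp [ha]

theorem chainBV_toNat {V : Type} {w : V → ℕ} (σ : (v : V) → BitVec (w v)) :
    ∀ {n : ℕ} (ts : Fin n → BVTerm V w 1) (b : Fin n → Bool),
    (∀ i, (ts i).eval σ = BitVec.ofBool (b i)) →
    ((chainBV ts).eval σ).toNat = natOf b
  | 0, ts, b, _ => rfl
  | n + 1, ts, b, h => by
      rw [chainBV, BVTerm.eval, BVTerm.eval, BitVec.toNat_cast, BitVec.toNat_append,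
        h ⟨n, n.lt_succ_self⟩, BitVec.toNat_ofBool,
        chainBV_toNat σ (fun i => ts i.castSucc) (fun i => b i.castSucc)
          (fun i => h i.castSucc)]
      rfl

theorem transQF_eval {F : Type} {ar : F → ℕ}
    (I : (f : F) → (Fin (ar f) → Bool) → Bool) (σ : (f : F) → BitVec (2 ^ ar f))
    (ψ : SO2QF F ar)
    (h : ∀ f ∈ ψ.symbols, ∀ a : Fin (ar f) → Bool, (σ f).getLsbD (natOf a) = I f a) :
    (transQF ψ).eval σ = BitVec.ofBool (ψ.eval I) := by
  induction ψ with
  | and φ ψ ihφ ihψ =>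
      have hφ := ihφ (fun f hf => h f (Set.mem_union_left _ hf))
      have hψ := ihψ (fun f hf => h f (Set.mem_union_right _ hf))
      rw [transQF, BVTerm.eval, hφ, hψ, SO2QF.eval]
      cases φ.eval I <;> cases ψ.eval I <;> rfl
  | not φ ihφ =>
      have hφ := ihφ (fun f hf => h f hf)
      rw [transQF, BVTerm.eval, hφ, SO2QF.eval]
      cases φ.eval I <;> rfl
  | app f args ih =>
      have hf : f ∈ (SO2QF.app f args).symbols := Set.mem_insert _ _
      rw [transQF, SO2QF.eval]
      split
      · next h0 =>
          rw [BVTerm.eval, BVTerm.eval]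
          rw [← ofBool_getLsbD_one (BitVec.cast _ (σ f))]
          congr 1
          rw [BitVec.getLsbD_cast]
          have := h f hf (fun i => (args i).eval I)
          rwa [natOf_eq_zero h0] at this
      · next h0 =>
          rw [BVTerm.eval]
          congr 1
          have hb : ∀ i : Fin (ar f), (transQF (args i)).eval σ
              = BitVec.ofBool ((args i).eval I) := by
            intro i
            exact ih i (fun g hg => h g (Set.mem_insert_iff.mpr
              (Or.inr (Set.mem_iUnion.mpr ⟨i, hg⟩))))
          have hchain := chainBV_toNat σ (fun i => transQF (args i))
            (fun i => (args i).eval I) hb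
          simp only [BVTerm.eval, BitVec.toNat_cast, BitVec.toNat_append, hchain,
            BitVec.getLsbD_ushiftRight, Nat.add_zero]
          have hz : (0 : BitVec (2 ^ ar f - ar f)).toNat = 0 := rfl
          rw [hz, Nat.zero_shiftLeft, Nat.zero_or]
          exact h f hf _

theorem main_correspondence {F : Type} {ar : F → ℕ} [DecidableEq F] :
    ∀ (φ : SO2Prenex F ar) (B : Set F), φ.ClosedIn B →
    ∀ (I : (f : F) → (Fin (ar f) → Bool) → Bool) (σ : (f : F) → BitVec (2 ^ ar f)),
    (∀ f ∈ B, ∀ a : Fin (ar f) → Bool, (σ f).getLsbD (natOf a) = I f a) →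
    (φ.eval I = true ↔ bvTruth φ σ)
  | .matrix ψ, B, hc, I, σ, hagr => by
      rw [SO2Prenex.eval, bvTruth,
        transQF_eval I σ ψ (fun f hf => hagr f (hc hf))]
      cases ψ.eval I <;> simp
  | .ex f φ, B, hc, I, σ, hagr => by
      rw [SO2Prenex.eval, bvTruth, decide_eq_true_iff]
      constructor
      · rintro ⟨G, hG⟩
        refine ⟨bvOf G, ?_⟩
        refine (main_correspondence φ (insert f B) hc (Function.update I f G)
          (Function.update σ f (bvOf G)) ?_).mp hG
        intro g hg a
        rcases eq_or_ne g f with rfl | hne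
        · rw [Function.update_self, Function.update_self, getLsbD_bvOf]
        · rw [Function.update_of_ne hne, Function.update_of_ne hne]
          exact hagr g (hg.resolve_left hne) a
      · rintro ⟨x, hx⟩
        refine ⟨fun a => x.getLsbD (natOf a), ?_⟩
        refine (main_correspondence φ (insert f B) hc
          (Function.update I f (fun a => x.getLsbD (natOf a)))
          (Function.update σ f x) ?_).mpr hx
        intro g hg a
        rcases eq_or_ne g f with rfl | hne
        · rw [Function.update_self, Function.update_self]
        · rw [Function.update_of_ne hne, Function.update_of_ne hne]
          exact hagr g (hg.resolve_left hne) a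
  | .all f φ, B, hc, I, σ, hagr => by
      rw [SO2Prenex.eval, bvTruth, decide_eq_true_iff]
      constructor
      · intro hG x
        refine (main_correspondence φ (insert f B) hc
          (Function.update I f (fun a => x.getLsbD (natOf a)))
          (Function.update σ f x) ?_).mp (hG _)
        intro g hg a
        rcases eq_or_ne g f with rfl | hne
        · rw [Function.update_self, Function.update_self]
        · rw [Function.update_of_ne hne, Function.update_of_ne hne]
          exact hagr g (hg.resolve_left hne) a
      · intro hx G
        refine (main_correspondence φ (insert f B) hc (Function.update I f G)
          (Function.update σ f (bvOf G)) ?_).mpr (hx _)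
        intro g hg a
        rcases eq_or_ne g f with rfl | hne
        · rw [Function.update_self, Function.update_self, getLsbD_bvOf]
        · rw [Function.update_of_ne hne, Function.update_of_ne hne]
          exact hagr g (hg.resolve_left hne) a

/-- A closed prenex SO₂ formula `φ = Q̄ψ` is satisfiable
(i.e. `⟦φ⟧_I = 1` for some `F`-interpretation `I`) if and only if the closed
quantified bit-vector formula `φ^BV = Q̄^BV (ψ^BV = 1)` is true (being closed,
its truth does not depend on the ambient assignment `σ`). -/
theorem SO2Prenex_sat_iff_bv_true {F : Type} {ar : F → ℕ} [DecidableEq F]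
    (φ : SO2Prenex F ar) (hclosed : φ.ClosedIn ∅) :
    (∃ I : (f : F) → (Fin (ar f) → Bool) → Bool, φ.eval I = true) ↔
      (∀ σ : (f : F) → BitVec (2 ^ ar f), bvTruth φ σ) := by
  have key : ∀ (I : (f : F) → (Fin (ar f) → Bool) → Bool)
      (σ : (f : F) → BitVec (2 ^ ar f)), φ.eval I = true ↔ bvTruth φ σ := by
    intro I σ
    exact main_correspondence φ ∅ hclosed I σ (fun f hf => absurd hf (Set.notMem_empty f))
  constructor
  · rintro ⟨I, hI⟩ σ
    exact (key I σ).mp hI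
  · intro h
    exact ⟨fun _ _ => false, (key _ (fun f => 0)).mpr (h _)⟩
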